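/- Let λ be singular of countable cofinality, ⟨λ_n⟩ regular cardinals cofinal in λ. If S = ⟨f_α | α < μ⟩ and S' = ⟨f'_α | α < μ⟩ are both scales on ∏λ_n of the same length μ = λ⁺, then there is a club C ⊆ μ such that every δ ∈ C of uncountable cofinality is a good point of S if and only if it is a good point of S'. -/

import Mathlib

open Filter

/-- `g` is a member of the product ∏ λ_n. -/
def InProd (lam : ℕ → Ordinal) (g : ℕ → Ordinal) : Prop := ∀ n, g n < lam n

/-- Eventual domination: f ≤* g. -/
def LeStar (f g : ℕ → Ordinal) : Prop := ∀ᶠ n in atTop, f n ≤ g n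

/-- A scale of length μ on ∏ λ_n: a ≤*-increasing sequence, cofinal in the
eventual domination order. -/
def IsScale (lam : ℕ → Ordinal) (μ : Ordinal) (f : Ordinal → ℕ → Ordinal) : Prop :=
  (∀ α < μ, InProd lam (f α)) ∧
  (∀ α β, α < β → β < μ → LeStar (f α) (f β)) ∧
  (∀ g, InProd lam g → ∃ α < μ, LeStar g (f α))

/-- β is a good point of the scale f: there are n < ω and a cofinal A ⊆ β such that
for all α₀ < α₁ in A, f_{α₀}(m) ≤ f_{α₁}(m) for all m ≥ n. -/
def IsGoodPoint (f : Ordinal → ℕ → Ordinal) (β : Ordinal) : Prop :=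
  ∃ n : ℕ, ∃ A : Set Ordinal, A ⊆ Set.Iio β ∧ (∀ γ < β, ∃ δ ∈ A, γ ≤ δ) ∧
    ∀ α₀ ∈ A, ∀ α₁ ∈ A, α₀ < α₁ → ∀ m ≥ n, f α₀ m ≤ f α₁ m

/-!
Let `C` be the set of `δ < λ⁺` closed under the two maps sending `α` to some `β ≥ α` with
`f α ≤* f' β`, resp. `f' α ≤* f β`; as `λ⁺` is regular and uncountable, `C` is a club.
For `δ ∈ C` of uncountable cofinality, a cofinal set `A` witnessing goodness for `f` yields
interlaced triples `a ≤ b ≤ c` with `a, c ∈ A` and `f a ≤ f' b ≤ f c` beyond some `N`.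
Countably many possible `N` and uncountable cofinality give a cofinal family of triples with a
common bound; a greedy sparse choice among them, in which each `c` lies below the next `a`, makes
the middle points `b` a witness of goodness for `f'`.
-/

open Filter Order Ordinal Set
open scoped Cardinal

namespace LeStar

theorem refl (f : ℕ → Ordinal) : LeStar f f :=
  Eventually.of_forall fun _ => le_rfl

theorem trans {f g h : ℕ → Ordinal} (hfg : LeStar f g) (hgh : LeStar g h) : LeStar f h := by
  filter_upwards [hfg, hgh] with n h₁ h₂
  exact h₁.trans h₂

end LeStar

namespace IsScale

variable {lam : ℕ → Ordinal} {μ : Ordinal} {f : Ordinal → ℕ → Ordinal}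

theorem leStar_of_le (hf : IsScale lam μ f) {α β : Ordinal} (hαβ : α ≤ β) (hβ : β < μ) :
    LeStar (f α) (f β) := by
  rcases hαβ.lt_or_eq with h | rfl
  · exact hf.2.1 α β h hβ
  · exact LeStar.refl _

theorem exists_ge_leStar (hf : IsScale lam μ f) {g : ℕ → Ordinal} (hg : InProd lam g)
    {x : Ordinal} (hx : x < μ) : ∃ y < μ, x ≤ y ∧ LeStar g (f y) := by
  obtain ⟨y, hy, hgy⟩ := hf.2.2 g hg
  have hxy : max x y < μ := max_lt hx hy
  exact ⟨max x y, hxy, le_max_left _ _, hgy.trans (hf.leStar_of_le (le_max_right _ _) hxy)⟩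

end IsScale

theorem Cardinal.IsRegular.exists_closedUnder_ge {κ : Cardinal} (hκ : κ.IsRegular) (hκ₀ : κ ≠ ℵ₀)
    {θ : Ordinal → Ordinal} (hθ : ∀ α < κ.ord, θ α < κ.ord) {x : Ordinal} (hx : x < κ.ord) :
    ∃ δ, x ≤ δ ∧ δ < κ.ord ∧ ∀ α < δ, θ α < δ := by
  set step : Ordinal → Ordinal := fun y => ⨆ α : Iio y, succ (θ α)
  have step_lt : ∀ y < κ.ord, step y < κ.ord := fun y hy => by
    apply Ordinal.lift_iSup_lt_of_lt_cof
    · rwa [← Ordinal.lift_cof, hκ.cof_ord, Cardinal.mk_Iio_ordinal, Cardinal.lift_lift,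
        Cardinal.lift_lt, ← Cardinal.lt_ord]
    · exact fun α => (Cardinal.isSuccLimit_ord hκ.aleph0_le).succ_lt (hθ α (α.2.trans hy))
  refine ⟨nfp step x, le_nfp _ _, nfp_lt_ord_of_isRegular hκ hκ₀ step_lt hx, fun α hα => ?_⟩
  obtain ⟨n, hn⟩ := lt_nfp_iff.1 hα
  calc θ α < succ (θ α) := lt_succ _
    _ ≤ step (step^[n] x) := Ordinal.le_iSup (fun β : Iio _ => succ (θ β)) ⟨α, hn⟩
    _ ≤ nfp step x := by
      rw [← Function.iterate_succ_apply' step n x]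
      exact iterate_le_nfp _ _ _

theorem exists_cofinal_fiber {δ : Ordinal} (hδ : ℵ₀ < δ.cof) (N : Ordinal → ℕ) :
    ∃ k, ∀ x < δ, ∃ γ, x ≤ γ ∧ γ < δ ∧ N γ = k := by
  by_contra! h
  choose b hbδ hb using h
  have hsup : ⨆ k, b k < δ := Ordinal.lift_iSup_lt_of_lt_cof (by simpa using hδ) hbδ
  exact hb _ _ (Ordinal.le_iSup b _) hsup rfl

def IsGreedyPick (S : Set Ordinal) (h : Ordinal → Ordinal) (γ : Ordinal) : Prop :=
  γ ∈ S ∧ ∀ γ₀ < γ, IsGreedyPick S h γ₀ → h γ₀ < γ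
termination_by γ

theorem isGreedyPick_iff {S : Set Ordinal} {h : Ordinal → Ordinal} {γ : Ordinal} :
    IsGreedyPick S h γ ↔ γ ∈ S ∧ ∀ γ₀ < γ, IsGreedyPick S h γ₀ → h γ₀ < γ := by
  rw [IsGreedyPick]

theorem exists_sparse_cofinal {δ : Ordinal} (hδ : IsSuccLimit δ) {S : Set Ordinal}
    (hS : ∀ x < δ, ∃ γ ∈ S, x ≤ γ) {h : Ordinal → Ordinal} (hh : ∀ γ ∈ S, h γ < δ) :
    ∃ T ⊆ S, (∀ x < δ, ∃ γ ∈ T, x ≤ γ) ∧ ∀ γ ∈ T, ∀ γ' ∈ T, γ < γ' → h γ < γ' := by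
  set T := {γ | IsGreedyPick S h γ}
  have hT_sparse : ∀ γ ∈ T, ∀ γ' ∈ T, γ < γ' → h γ < γ' :=
    fun γ hγ γ' hγ' hlt => (isGreedyPick_iff.1 hγ').2 γ hlt hγ
  refine ⟨T, fun γ hγ => (isGreedyPick_iff.1 hγ).1, fun x hx => ?_, hT_sparse⟩
  by_contra! hTx
  -- A bounded sparse set has `h` bounded below `δ`: only its maximum, if any, can escape `x`.
  obtain ⟨β, hβ, hxβ, hTβ⟩ : ∃ β < δ, x ≤ β ∧ ∀ t ∈ T, h t ≤ β := by
    by_cases hmax : ∃ m ∈ T, ∀ t ∈ T, t ≤ m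
    · obtain ⟨m, hm, hmax⟩ := hmax
      refine ⟨max x (h m), max_lt hx (hh m (isGreedyPick_iff.1 hm).1), le_max_left _ _,
        fun t ht => ?_⟩
      rcases (hmax t ht).lt_or_eq with hlt | rfl
      · exact ((hT_sparse t ht m hm hlt).trans (hTx m hm)).le.trans (le_max_left _ _)
      · exact le_max_right _ _
    · push Not at hmax
      refine ⟨x, hx, le_rfl, fun t ht => ?_⟩
      obtain ⟨t', ht', htt'⟩ := hmax t ht
      exact ((hT_sparse t ht t' ht' htt').trans (hTx t' ht')).le
  obtain ⟨γ, hγS, hβγ⟩ := hS (succ β) (hδ.succ_lt hβ)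
  have hγT : γ ∈ T :=
    isGreedyPick_iff.2 ⟨hγS, fun t _ ht => (hTβ t ht).trans_lt (succ_le_iff.1 hβγ)⟩
  exact (hTx γ hγT).not_ge (hxβ.trans (le_succ β) |>.trans hβγ)

def DominatedBelow (f g : Ordinal → ℕ → Ordinal) (δ : Ordinal) : Prop :=
  ∀ α < δ, ∃ β < δ, α ≤ β ∧ LeStar (f α) (g β)

theorem exists_interlaced {f g : Ordinal → ℕ → Ordinal} {δ : Ordinal} {A : Set Ordinal}
    (hf : ∀ α β, α ≤ β → β < δ → LeStar (f α) (f β)) (hAδ : A ⊆ Iio δ)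
    (hA : ∀ γ < δ, ∃ a ∈ A, γ ≤ a) (hfg : DominatedBelow f g δ) (hgf : DominatedBelow g f δ)
    {γ : Ordinal} (hγ : γ < δ) :
    ∃ a ∈ A, ∃ b, ∃ c ∈ A, γ ≤ a ∧ a ≤ b ∧ b ≤ c ∧
      ∃ N, ∀ m ≥ N, f a m ≤ g b m ∧ g b m ≤ f c m := by
  obtain ⟨a, haA, hγa⟩ := hA γ hγ
  obtain ⟨b, hbδ, hab, hfab⟩ := hfg a (hAδ haA)
  obtain ⟨z, hzδ, hbz, hgbz⟩ := hgf b hbδ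
  obtain ⟨c, hcA, hzc⟩ := hA z hzδ
  have hgbc : LeStar (g b) (f c) := hgbz.trans (hf z c hzc (hAδ hcA))
  exact ⟨a, haA, b, c, hcA, hγa, hab, hbz.trans hzc, eventually_atTop.1 (hfab.and hgbc)⟩

theorem IsGoodPoint.of_dominatedBelow {f g : Ordinal → ℕ → Ordinal} {δ : Ordinal}
    (hδ : ℵ₀ < δ.cof) (hf : ∀ α β, α ≤ β → β < δ → LeStar (f α) (f β))
    (hfg : DominatedBelow f g δ) (hgf : DominatedBelow g f δ) (hgood : IsGoodPoint f δ) :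
    IsGoodPoint g δ := by
  obtain ⟨n, A, hAδ, hA, hAmono⟩ := hgood
  choose! a ha b c hc hγa hab hbc N hN using
    fun γ (hγ : γ < δ) => exists_interlaced hf hAδ hA hfg hgf hγ
  obtain ⟨k, hk⟩ := exists_cofinal_fiber hδ N
  have hS : ∀ x < δ, ∃ γ ∈ {γ | γ < δ ∧ N γ = k}, x ≤ γ := fun x hx =>
    (hk x hx).imp fun _ ⟨hxγ, hγδ, hNγ⟩ => ⟨⟨hγδ, hNγ⟩, hxγ⟩
  obtain ⟨T, hTS, hT, hT_sparse⟩ := exists_sparse_cofinal (h := c)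
    (one_lt_cof_iff.1 (Cardinal.one_lt_aleph0.trans hδ)) hS (fun γ hγ => hAδ (hc γ hγ.1))
  have hbδ : ∀ γ ∈ T, b γ < δ := fun γ hγ =>
    (hbc γ (hTS hγ).1).trans_lt (hAδ (hc γ (hTS hγ).1))
  refine ⟨max n k, b '' T, image_subset_iff.2 hbδ, fun x hx => ?_, ?_⟩
  · obtain ⟨γ, hγT, hxγ⟩ := hT x hx
    exact ⟨b γ, mem_image_of_mem b hγT,
      hxγ.trans ((hγa γ (hTS hγT).1).trans (hab γ (hTS hγT).1))⟩
  rintro _ ⟨γ, hγT, rfl⟩ _ ⟨γ', hγ'T, rfl⟩ hbb m hm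
  obtain ⟨⟨hγ, hNγ⟩, hγ', hNγ'⟩ := And.intro (hTS hγT) (hTS hγ'T)
  have hγγ' : γ < γ' := by
    by_contra! h
    rcases h.lt_or_eq with h | rfl
    · exact hbb.not_ge <| (hbc γ' hγ').trans <| (hT_sparse γ' hγ'T γ hγT h).le.trans <|
        (hγa γ hγ).trans (hab γ hγ)
    · exact hbb.false
  have hca : c γ < a γ' := (hT_sparse γ hγT γ' hγ'T hγγ').trans_le (hγa γ' hγ')
  have hmk : N γ ≤ m ∧ N γ' ≤ m := ⟨hNγ ▸ le_of_max_le_right hm, hNγ' ▸ le_of_max_le_right hm⟩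
  calc g (b γ) m ≤ f (c γ) m := (hN γ hγ m hmk.1).2
    _ ≤ f (a γ') m := hAmono _ (hc γ hγ) _ (ha γ' hγ') hca m (le_of_max_le_left hm)
    _ ≤ g (b γ') m := (hN γ' hγ' m hmk.2).1

theorem good_points_scale_invariant_general
    (lamC : Cardinal) (hlam : Cardinal.aleph0 < lamC)
    (lamn : ℕ → Cardinal)
    (μ : Ordinal) (hμ : μ = (Order.succ lamC).ord)
    (f f' : Ordinal → ℕ → Ordinal)
    (hf : IsScale (fun n => (lamn n).ord) μ f)
    (hf' : IsScale (fun n => (lamn n).ord) μ f') :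
    ∃ C : Set Ordinal, C ⊆ Set.Iio μ ∧
      (∀ α < μ, ∃ β ∈ C, α ≤ β) ∧
      (∀ α, α < μ → Order.IsSuccLimit α → (∀ β < α, ∃ γ ∈ C, β < γ ∧ γ < α) → α ∈ C) ∧
      (∀ δ ∈ C, Cardinal.aleph0 < δ.cof → (IsGoodPoint f δ ↔ IsGoodPoint f' δ)) := by
  have hreg : (succ lamC).IsRegular := Cardinal.isRegular_succ hlam.le
  have hne : succ lamC ≠ ℵ₀ := (hlam.trans (lt_succ lamC)).ne'
  choose! G hG using fun α (hα : α < μ) => hf'.exists_ge_leStar (hf.1 α hα) hα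
  choose! G' hG' using fun α (hα : α < μ) => hf.exists_ge_leStar (hf'.1 α hα) hα
  refine ⟨{δ | δ < μ ∧ ∀ α < δ, G α < δ ∧ G' α < δ}, fun δ hδ => hδ.1, fun α hα => ?_,
    fun α hα _ hC => ⟨hα, fun β hβ => ?_⟩, ?_⟩
  · subst hμ
    obtain ⟨δ, hαδ, hδ, hcl⟩ := hreg.exists_closedUnder_ge hne (θ := fun α => max (G α) (G' α))
      (fun α hα => max_lt (hG α hα).1 (hG' α hα).1) hα
    exact ⟨δ, ⟨hδ, fun β hβ => max_lt_iff.1 (hcl β hβ)⟩, hαδ⟩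
  · obtain ⟨γ, ⟨-, hγ⟩, hβγ, hγα⟩ := hC β hβ
    exact (hγ β hβγ).imp (·.trans hγα) (·.trans hγα)
  · rintro δ ⟨hδ, hcl⟩ hcof
    have hdom : DominatedBelow f f' δ := fun α hα =>
      ⟨G α, (hcl α hα).1, (hG α (hα.trans hδ)).2⟩
    have hdom' : DominatedBelow f' f δ := fun α hα =>
      ⟨G' α, (hcl α hα).2, (hG' α (hα.trans hδ)).2⟩
    exact ⟨IsGoodPoint.of_dominatedBelow hcof (fun α β h hβ => hf.leStar_of_le h (hβ.trans hδ))
        hdom hdom',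
      IsGoodPoint.of_dominatedBelow hcof (fun α β h hβ => hf'.leStar_of_le h (hβ.trans hδ))
        hdom' hdom⟩

/-- λ singular of countable cofinality, ⟨λ_n⟩ regular cardinals cofinal
in λ.  If S and S' are two scales on ∏λ_n of the same length μ = λ⁺, then there is a
club C ⊆ μ such that every δ ∈ C of uncountable cofinality is good for S iff it is
good for S'. -/
theorem good_points_scale_invariant
    (lamC : Cardinal) (hlam : Cardinal.aleph0 < lamC)
    (hsing : lamC.ord.cof = Cardinal.aleph0)
    (lamn : ℕ → Cardinal) (hregn : ∀ n, (lamn n).IsRegular)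
    (hlt : ∀ n, lamn n < lamC) (hcof : ∀ c < lamC, ∃ n, c ≤ lamn n)
    (μ : Ordinal) (hμ : μ = (Order.succ lamC).ord)
    (f f' : Ordinal → ℕ → Ordinal)
    (hf : IsScale (fun n => (lamn n).ord) μ f)
    (hf' : IsScale (fun n => (lamn n).ord) μ f') :
    ∃ C : Set Ordinal, C ⊆ Set.Iio μ ∧
      (∀ α < μ, ∃ β ∈ C, α ≤ β) ∧
      (∀ α, α < μ → Order.IsSuccLimit α → (∀ β < α, ∃ γ ∈ C, β < γ ∧ γ < α) → α ∈ C) ∧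
      (∀ δ ∈ C, Cardinal.aleph0 < δ.cof → (IsGoodPoint f δ ↔ IsGoodPoint f' δ)) :=
  good_points_scale_invariant_general lamC hlam lamn μ hμ f f' hf hf'
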